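/- arXiv:0904.2667 — 6 statements merged into one kernel-verified Lean document; each statement's English description precedes it below -/
import Mathlib

section
/- Division lemma: Let f(w) = Σᵢ wⁱaᵢ be a power series with quaternionic coefficients converging on the ball B_R of radius R > 0, and let α ∈ B_R. Then there exist a unique power series g converging on B_R and a unique quaternion r such that f(w) = (w − α) * g(w) + r, where * denotes the product of power series treating w as a central variable. Moreover r = f(α). -/
noncomputable section

/-- The real quaternions. -/
abbrev Quat := Quaternion ℝ

/-- Evaluation of a quaternionic power series with right coefficients `a` at `q`:
`f(q) = Σᵢ qⁱ aᵢ` (the sum is `0` by convention if the series does not converge). -/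
def pev (a : ℕ → Quat) (q : Quat) : Quat := ∑' i, q ^ i * a i

/-- The power series with coefficients `a` converges on the open ball of radius `R`. -/
def ConvOn (a : ℕ → Quat) (R : ℝ) : Prop :=
  ∀ q : Quat, ‖q‖ < R → Summable fun i => q ^ i * a i

/-- Coefficients of the star product `f * g` (convolution of coefficients). -/
def scoef (a b : ℕ → Quat) : ℕ → Quat :=
  fun k => ∑ p ∈ Finset.HasAntidiagonal.antidiagonal k, a p.1 * b p.2

/-- Coefficients of the conjugate series `conj f`. -/
def cconj (a : ℕ → Quat) : ℕ → Quat := fun i => star (a i)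

/-- Coefficients of the normal (symmetrized) series `N(f) = f * conj f`. -/
def Ncoef (a : ℕ → Quat) : ℕ → Quat := scoef a (cconj a)

/-- The conjugacy class of `α`: quaternions with the same trace and the same norm. -/
def Sset (α : Quat) : Set Quat := {x | x + star x = α + star α ∧ ‖x‖ = ‖α‖}

/-- The characteristic polynomial of `α`, evaluated at `q`:
`Δ_α(q) = q² - q·tr(α) + |α|²`. -/
def Δev (α q : Quat) : Quat := q ^ 2 - q * (α + star α) + algebraMap ℝ Quat (‖α‖ ^ 2)

/-- Coefficients of the linear polynomial `w - α`. -/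
def lin (α : Quat) : ℕ → Quat := fun k => if k = 0 then -α else if k = 1 then 1 else 0

/-- Zero set of the series `a` in the ball of radius `R`. -/
def Vset (a : ℕ → Quat) (R : ℝ) : Set Quat := {q | ‖q‖ < R ∧ pev a q = 0}

/-!
Synthetic division: with `g_k = Σ_j α^j a_{k+1+j}` the coefficients of `(w - α) * g` are
`g_{k-1} - α g_k = a_k` for `k ≥ 1` and `-α g_0 = a_0 - f(α)`, and Cauchy estimates show that `g`
converges on `B_R`. Since `α` commutes with its own powers, `((w - α) * g)(α) = (α - α) g(α) = 0`,
which forces `r = f(α)`. For uniqueness, on the real diameter of `B_R` the series are ordinary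
real power series with values in `ℍ`, so the identity theorem gives `(w - α) * (g - g') = 0`
coefficientwise, and then `g = g'` because `ℍ` has no zero divisors.
-/

open scoped NNReal Topology

theorem eq_zero_of_tsum_pow_smul_eventually_eq_zero {𝕜 E : Type*} [NontriviallyNormedField 𝕜]
    [NormedAddCommGroup E] [NormedSpace 𝕜 E] [CompleteSpace E] {c : ℕ → E} {r : ℝ≥0}
    (hr : 0 < r) (hs : Summable fun n => ‖c n‖ * (r : ℝ) ^ n)
    (h : ∀ᶠ z in 𝓝 (0 : 𝕜), ∑' n, z ^ n • c n = 0) : c = 0 := by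
  set p : FormalMultilinearSeries 𝕜 𝕜 E := fun n =>
    ContinuousMultilinearMap.mkPiRing 𝕜 (Fin n) (c n)
  have hrad : 0 < p.radius :=
    lt_of_lt_of_le (by exact_mod_cast hr) (p.le_radius_of_summable_norm (by simpa [p] using hs))
  have hp : HasFPowerSeriesAt p.sum p 0 := (p.hasFPowerSeriesOnBall hrad).hasFPowerSeriesAt
  have hsum : ∀ z, p.sum z = ∑' n, z ^ n • c n := fun z => by
    simp [FormalMultilinearSeries.sum, p]
  have hp0 : p = 0 := hp.eq_zero_of_eventually (by simpa [Filter.EventuallyEq, hsum] using h)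
  ext n
  simpa [p, FormalMultilinearSeries.coeff] using congrArg (fun p => p.coeff n) hp0

lemma eq_zero_of_forall_eq_mul_succ {M₀ : Type*} [MulZeroClass M₀] [NoZeroDivisors M₀]
    {α : M₀} {h : ℕ → M₀} (h0 : α * h 0 = 0) (hrec : ∀ k, h k = α * h (k + 1)) : h = 0 := by
  have cancel : ∀ k, α * h k = 0 → h k = 0 := fun k hk => by
    rcases mul_eq_zero.mp hk with hα | hk
    · rw [hrec k, hα, zero_mul]
    · exact hk
  funext k
  induction k with
  | zero => exact cancel 0 h0
  | succ k ih => exact cancel (k + 1) ((hrec k).symm.trans ih)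

lemma norm_coe_pow_mul (t : ℝ) (n : ℕ) (x : Quat) : ‖(t : Quat) ^ n * x‖ = |t| ^ n * ‖x‖ := by
  rw [norm_mul, norm_pow, Quaternion.norm_coe, Real.norm_eq_abs]

lemma coe_pow_mul_eq_smul (t : ℝ) (n : ℕ) (x : Quat) : (t : Quat) ^ n * x = t ^ n • x := by
  rw [← Quaternion.coe_pow, Quaternion.coe_mul_eq_smul]

section ConvOn

variable {a b : ℕ → Quat} {R : ℝ}

lemma ConvOn.summable_pow_mul_norm (ha : ConvOn a R) {ρ : ℝ} (hρ0 : 0 ≤ ρ) (hρ : ρ < R) :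
    Summable fun n => ρ ^ n * ‖a n‖ := by
  have hq : ‖(ρ : Quat)‖ < R := by rwa [Quaternion.norm_coe, Real.norm_of_nonneg hρ0]
  refine (summable_norm_iff.mpr (ha _ hq)).congr fun n => ?_
  rw [norm_coe_pow_mul, abs_of_nonneg hρ0]

lemma ConvOn.exists_pow_mul_norm_le (ha : ConvOn a R) {ρ : ℝ} (hρ0 : 0 ≤ ρ) (hρ : ρ < R) :
    ∃ M, ∀ n, ρ ^ n * ‖a n‖ ≤ M := by
  obtain ⟨M, hM⟩ := (ha.summable_pow_mul_norm hρ0 hρ).tendsto_atTop_zero.bddAbove_range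
  exact ⟨M, fun n => hM (Set.mem_range_self n)⟩

lemma convOn_of_exists_pow_mul_norm_le {r₀ : ℝ} (hr₀ : r₀ < R)
    (h : ∀ ρ, r₀ < ρ → ρ < R → ∃ M, ∀ n, ρ ^ n * ‖a n‖ ≤ M) : ConvOn a R := by
  intro q hq
  have hmax : max ‖q‖ r₀ < R := max_lt hq hr₀
  set ρ := (max ‖q‖ r₀ + R) / 2 with hρ_def
  obtain ⟨M, hM⟩ := h ρ (by linarith [le_max_right ‖q‖ r₀]) (by linarith)
  have hqρ : ‖q‖ < ρ := by linarith [le_max_left ‖q‖ r₀]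
  have hρ : 0 < ρ := (norm_nonneg q).trans_lt hqρ
  refine Summable.of_norm_bounded
    ((summable_geometric_of_lt_one (by positivity) ((div_lt_one hρ).mpr hqρ)).mul_left M)
    fun n => ?_
  calc ‖q ^ n * a n‖ = (‖q‖ / ρ) ^ n * (ρ ^ n * ‖a n‖) := by
        rw [norm_mul, norm_pow, div_pow]; field_simp
    _ ≤ M * (‖q‖ / ρ) ^ n := by rw [mul_comm M]; gcongr; exact hM n

lemma ConvOn.eq_of_pev_eq (ha : ConvOn a R) (hb : ConvOn b R) (hR : 0 < R)
    (h : ∀ q : Quat, ‖q‖ < R → pev a q = pev b q) : a = b := by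
  have hR2 : 0 < R / 2 := by positivity
  refine sub_eq_zero.mp (eq_zero_of_tsum_pow_smul_eventually_eq_zero (𝕜 := ℝ)
    (r := ⟨R / 2, hR2.le⟩) hR2 ?_ ?_)
  · have hq : ‖((R / 2 : ℝ) : Quat)‖ < R := by
      rw [Quaternion.norm_coe, Real.norm_of_nonneg hR2.le]; linarith
    refine (summable_norm_iff.mpr ((ha _ hq).sub (hb _ hq))).congr fun n => ?_
    rw [← mul_sub, norm_coe_pow_mul, abs_of_nonneg hR2.le, mul_comm]
    rfl
  · filter_upwards [Metric.ball_mem_nhds (0 : ℝ) hR] with t ht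
    have hq : ‖(t : Quat)‖ < R := by rwa [Quaternion.norm_coe, ← dist_zero_right]
    simp only [← coe_pow_mul_eq_smul, Pi.sub_apply, mul_sub]
    rw [(ha _ hq).tsum_sub (hb _ hq)]
    exact sub_eq_zero.mpr (h _ hq)

end ConvOn

section Linear

variable (α : Quat) (g : ℕ → Quat)

@[simp] lemma scoef_lin_zero : scoef (lin α) g 0 = -(α * g 0) := by
  simp [scoef, lin]

@[simp] lemma scoef_lin_succ (k : ℕ) : scoef (lin α) g (k + 1) = g k - α * g (k + 1) := by
  rw [scoef, Finset.Nat.sum_antidiagonal_eq_sum_range_succ_mk, Finset.sum_range_succ',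
    Finset.sum_range_succ']
  simp [lin, sub_eq_add_neg, add_comm]

lemma scoef_lin_injective : Function.Injective (scoef (lin α)) := by
  intro g₁ g₂ h
  refine sub_eq_zero.mp (eq_zero_of_forall_eq_mul_succ (α := α) ?_ fun k => ?_)
  · simpa [mul_sub, sub_eq_zero] using congrFun h 0
  · simpa [mul_sub, sub_eq_sub_iff_sub_eq_sub] using congrFun h (k + 1)

variable {α g}

lemma hasSum_scoef_lin {q : Quat} (hg : Summable fun k => q ^ k * g k) :
    HasSum (fun k => q ^ k * scoef (lin α) g k) (q * pev g q - ∑' k, q ^ k * (α * g k)) := by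
  have hshift : HasSum (fun k => if k = 0 then 0 else q ^ k * g (k - 1)) (q * pev g q) := by
    refine (hasSum_nat_add_iff' 1).mp ?_
    simpa [pev, pow_succ', mul_assoc] using hg.hasSum.mul_left q
  have hαg : Summable fun k => q ^ k * (α * g k) := by
    refine summable_norm_iff.mp (((summable_norm_iff.mpr hg).mul_left ‖α‖).congr fun k => ?_)
    simp only [norm_mul, norm_pow]; ring
  refine (hshift.sub hαg.hasSum).congr_fun fun k => ?_
  cases k <;> simp [mul_sub]

lemma ConvOn.scoef_lin {R : ℝ} (hg : ConvOn g R) : ConvOn (scoef (lin α) g) R :=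
  fun q hq => (hasSum_scoef_lin (hg q hq)).summable

lemma pev_scoef_lin_of_commute {q : Quat} (hg : Summable fun k => q ^ k * g k)
    (hαq : Commute α q) : pev (scoef (lin α) g) q = (q - α) * pev g q := by
  have hcomm : ∀ k, q ^ k * (α * g k) = α * (q ^ k * g k) := fun k => by
    rw [← mul_assoc, ← mul_assoc, ((hαq.pow_right k).symm).eq]
  rw [pev, (hasSum_scoef_lin hg).tsum_eq, tsum_congr hcomm, tsum_mul_left, sub_mul]
  rfl

lemma pev_scoef_lin_self (hg : Summable fun k => α ^ k * g k) : pev (scoef (lin α) g) α = 0 := by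
  rw [pev_scoef_lin_of_commute hg (Commute.refl α), sub_self, zero_mul]

end Linear

lemma pev_add {a b : ℕ → Quat} {q : Quat} (ha : Summable fun k => q ^ k * a k)
    (hb : Summable fun k => q ^ k * b k) : pev (a + b) q = pev a q + pev b q := by
  simp only [pev, Pi.add_apply, mul_add, ha.tsum_add hb]

lemma pev_single_zero (r q : Quat) : pev (Pi.single 0 r) q = r := by
  rw [pev, tsum_eq_single 0 fun k hk => by simp [hk]]
  simp

def quotLin (a : ℕ → Quat) (α : Quat) : ℕ → Quat := fun k => pev (fun j => a (k + 1 + j)) α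

section Quotient

variable {a : ℕ → Quat} {α : Quat} {ρ M : ℝ}

lemma norm_pow_mul_le (hρ : 0 < ρ) (hM : ∀ n, ρ ^ n * ‖a n‖ ≤ M) (k j : ℕ) :
    ‖α ^ j * a (k + j)‖ ≤ M / ρ ^ k * (‖α‖ / ρ) ^ j := by
  have hk : ‖a (k + j)‖ ≤ M / ρ ^ (k + j) := by
    rw [le_div_iff₀ (by positivity), mul_comm]; exact hM _
  calc ‖α ^ j * a (k + j)‖ ≤ ‖α‖ ^ j * (M / ρ ^ (k + j)) := by
        rw [norm_mul, norm_pow]; gcongr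
    _ = M / ρ ^ k * (‖α‖ / ρ) ^ j := by rw [pow_add, div_pow]; field_simp

lemma summable_tail_of_bound (hαρ : ‖α‖ < ρ) (hM : ∀ n, ρ ^ n * ‖a n‖ ≤ M) (k : ℕ) :
    Summable fun j => α ^ j * a (k + j) :=
  have hρ : 0 < ρ := (norm_nonneg α).trans_lt hαρ
  Summable.of_norm_bounded ((summable_geometric_of_lt_one (by positivity)
    ((div_lt_one hρ).mpr hαρ)).mul_left _) (norm_pow_mul_le hρ hM k)

lemma norm_pev_tail_le (hαρ : ‖α‖ < ρ) (hM : ∀ n, ρ ^ n * ‖a n‖ ≤ M) (k : ℕ) :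
    ‖pev (fun j => a (k + j)) α‖ ≤ M / ρ ^ k * (1 - ‖α‖ / ρ)⁻¹ :=
  have hρ : 0 < ρ := (norm_nonneg α).trans_lt hαρ
  tsum_of_norm_bounded ((hasSum_geometric_of_lt_one (by positivity)
    ((div_lt_one hρ).mpr hαρ)).mul_left _) (norm_pow_mul_le hρ hM k)

lemma pev_tail_eq {k : ℕ} (hs : Summable fun j => α ^ j * a (k + j)) :
    pev (fun j => a (k + j)) α = a k + α * pev (fun j => a (k + 1 + j)) α := by
  rw [pev, hs.tsum_eq_zero_add, pev, ← tsum_mul_left]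
  simp [pow_succ', mul_assoc, add_assoc, add_comm 1]

variable {R : ℝ}

lemma ConvOn.summable_tail (ha : ConvOn a R) (hα : ‖α‖ < R) (k : ℕ) :
    Summable fun j => α ^ j * a (k + j) := by
  obtain ⟨M, hM⟩ := ha.exists_pow_mul_norm_le (ρ := (‖α‖ + R) / 2)
    (by linarith [norm_nonneg α]) (by linarith)
  exact summable_tail_of_bound (by linarith) hM k

lemma convOn_quotLin (ha : ConvOn a R) (hα : ‖α‖ < R) : ConvOn (quotLin a α) R := by
  refine convOn_of_exists_pow_mul_norm_le hα fun ρ hαρ hρR => ?_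
  have hρ : 0 < ρ := (norm_nonneg α).trans_lt hαρ
  obtain ⟨M, hM⟩ := ha.exists_pow_mul_norm_le hρ.le hρR
  refine ⟨M / ρ * (1 - ‖α‖ / ρ)⁻¹, fun k => ?_⟩
  calc ρ ^ k * ‖quotLin a α k‖ ≤ ρ ^ k * (M / ρ ^ (k + 1) * (1 - ‖α‖ / ρ)⁻¹) := by
        gcongr; exact norm_pev_tail_le hαρ hM (k + 1)
    _ = M / ρ * (1 - ‖α‖ / ρ)⁻¹ := by rw [pow_succ]; field_simp

lemma ConvOn.scoef_lin_quotLin_add_single (ha : ConvOn a R) (hα : ‖α‖ < R) :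
    scoef (lin α) (quotLin a α) + Pi.single 0 (pev a α) = a := by
  funext k
  cases k with
  | zero =>
    have h := pev_tail_eq (ha.summable_tail hα 0)
    simp only [zero_add] at h
    simp [h, quotLin]
  | succ k =>
    simp [quotLin, pev_tail_eq (ha.summable_tail hα (k + 1))]

lemma ConvOn.pev_eq_scoef_lin_quotLin_add (ha : ConvOn a R) (hα : ‖α‖ < R) {q : Quat}
    (hq : ‖q‖ < R) : pev a q = pev (scoef (lin α) (quotLin a α)) q + pev a α := by
  conv_lhs => rw [← ha.scoef_lin_quotLin_add_single hα]
  rw [pev_add ((convOn_quotLin ha hα).scoef_lin q hq), pev_single_zero]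
  exact summable_of_ne_finset_zero (s := {0}) fun k hk => by simp_all

end Quotient

theorem stmt2_general (a : ℕ → Quat) (R : ℝ) (ha : ConvOn a R)
    (α : Quat) (hα : ‖α‖ < R) :
    (∃! p : (ℕ → Quat) × Quat, ConvOn p.1 R ∧
      ∀ q : Quat, ‖q‖ < R → pev a q = pev (scoef (lin α) p.1) q + p.2) ∧
    (∀ (g : ℕ → Quat) (r : Quat), ConvOn g R →
      (∀ q : Quat, ‖q‖ < R → pev a q = pev (scoef (lin α) g) q + r) →
      r = pev a α) := by
  have remainder (g : ℕ → Quat) (r : Quat) (hg : ConvOn g R)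
      (hgr : ∀ q : Quat, ‖q‖ < R → pev a q = pev (scoef (lin α) g) q + r) : r = pev a α := by
    simpa [pev_scoef_lin_self (hg α hα)] using (hgr α hα).symm
  have hquot := convOn_quotLin ha hα
  refine ⟨⟨(quotLin a α, pev a α), ⟨hquot, fun q hq => ha.pev_eq_scoef_lin_quotLin_add hα hq⟩,
    ?_⟩, remainder⟩
  rintro ⟨g, r⟩ ⟨hg, hgr⟩
  obtain rfl := remainder g r hg hgr
  refine Prod.ext (scoef_lin_injective α ?_) rfl
  refine (hg.scoef_lin).eq_of_pev_eq hquot.scoef_lin ((norm_nonneg α).trans_lt hα) fun q hq => ?_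
  exact add_right_cancel ((hgr q hq).symm.trans (ha.pev_eq_scoef_lin_quotLin_add hα hq))

/-- Division lemma for quaternionic power series: for `f` convergent on `B_R` and
`α ∈ B_R`, there exist a unique power series `g` converging on `B_R` and a unique
quaternion `r` with `f(w) = (w - α) * g(w) + r`; moreover `r = f(α)`. -/
theorem stmt2 (a : ℕ → Quat) (R : ℝ) (hR : 0 < R) (ha : ConvOn a R)
    (α : Quat) (hα : ‖α‖ < R) :
    (∃! p : (ℕ → Quat) × Quat, ConvOn p.1 R ∧
      ∀ q : Quat, ‖q‖ < R → pev a q = pev (scoef (lin α) p.1) q + p.2) ∧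
    (∀ (g : ℕ → Quat) (r : Quat), ConvOn g R →
      (∀ q : Quat, ‖q‖ < R → pev a q = pev (scoef (lin α) g) q + r) →
      r = pev a α) :=
  stmt2_general a R ha α hα
end
end

section
/- If g(w) = Σₙ wⁿ bₙ where bₙ := α^{−1−n} · Σ_{j=n+1}^∞ αʲ aⱼ for a nonzero quaternion α with |α| < R, and Σⱼ wʲ aⱼ has radius of convergence ≥ R, then the power series Σₙ wⁿ bₙ converges at every x with |x| < R. -/
noncomputable section

/-!
Choose `t` with `max ‖x‖ ‖α‖ < t < R`. Convergence of `Σ tʲ aⱼ` bounds `tʲ ‖aⱼ‖ ≤ C`, so with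
`r = ‖α‖ / t < 1` the tail `Σ_{j>n} αʲ aⱼ` is at most `C rⁿ⁺¹ / (1 - r)`; the factor `α⁻ⁿ⁻¹`
cancels `‖α‖ⁿ⁺¹`, leaving `‖bₙ‖ ≤ C / ((1 - r) tⁿ⁺¹)`, and `Σ xⁿ bₙ` is dominated by a geometric
series of ratio `‖x‖ / t < 1`.
-/

section PowerSeries

variable {𝕜 : Type*} [NormedDivisionRing 𝕜]

theorem Summable.exists_norm_pow_mul_norm_le {q : 𝕜} {a : ℕ → 𝕜}
    (h : Summable fun i => q ^ i * a i) : ∃ C, ∀ i, ‖q‖ ^ i * ‖a i‖ ≤ C := by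
  obtain ⟨C, hC⟩ := h.tendsto_atTop_zero.norm.bddAbove_range
  exact ⟨C, fun i => by simpa only [norm_mul, norm_pow] using hC ⟨i, rfl⟩⟩

theorem norm_tsum_pow_mul_shift_le {α : 𝕜} {a : ℕ → 𝕜} {t C : ℝ} (hαt : ‖α‖ < t)
    (hC : ∀ i, t ^ i * ‖a i‖ ≤ C) (k : ℕ) :
    ‖∑' j, α ^ (j + k) * a (j + k)‖ ≤ C * (‖α‖ / t) ^ k * (1 - ‖α‖ / t)⁻¹ := by
  have ht : 0 < t := (norm_nonneg α).trans_lt hαt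
  have hr0 : 0 ≤ ‖α‖ / t := by positivity
  have hr1 : ‖α‖ / t < 1 := (div_lt_one ht).mpr hαt
  refine tsum_of_norm_bounded ((hasSum_geometric_of_lt_one hr0 hr1).mul_left _) fun j => ?_
  calc ‖α ^ (j + k) * a (j + k)‖
      = (‖α‖ / t) ^ (j + k) * (t ^ (j + k) * ‖a (j + k)‖) := by
        rw [norm_mul, norm_pow, div_pow]
        field_simp
    _ ≤ (‖α‖ / t) ^ (j + k) * C := by gcongr; exact hC _
    _ = C * (‖α‖ / t) ^ k * (‖α‖ / t) ^ j := by ring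

theorem norm_inv_pow_mul_le_div_pow {α z : 𝕜} {t K : ℝ} (ht : 0 < t) (hK : 0 ≤ K) {k : ℕ}
    (hz : ‖z‖ ≤ K * (‖α‖ / t) ^ k) : ‖α⁻¹ ^ k * z‖ ≤ K / t ^ k := by
  have hcancel : ‖α‖⁻¹ * (‖α‖ / t) ≤ t⁻¹ := by
    rw [← mul_div_assoc, div_eq_mul_inv]
    exact mul_le_of_le_one_left (inv_nonneg.mpr ht.le) (inv_mul_le_one_of_le₀ le_rfl (norm_nonneg α))
  calc ‖α⁻¹ ^ k * z‖ ≤ ‖α‖⁻¹ ^ k * (K * (‖α‖ / t) ^ k) := by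
        rw [norm_mul, norm_pow, norm_inv]; gcongr
    _ = K * (‖α‖⁻¹ * (‖α‖ / t)) ^ k := by ring
    _ ≤ K * t⁻¹ ^ k := by gcongr
    _ = K / t ^ k := by rw [inv_pow, div_eq_mul_inv]

theorem summable_pow_mul_of_norm_le_div_pow [CompleteSpace 𝕜] {x : 𝕜} {b : ℕ → 𝕜} {t K : ℝ}
    (hxt : ‖x‖ < t) (hb : ∀ n, ‖b n‖ ≤ K / t ^ n) : Summable fun n => x ^ n * b n := by
  have ht : 0 < t := (norm_nonneg x).trans_lt hxt
  refine .of_norm_bounded ((summable_geometric_of_lt_one (by positivity)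
    ((div_lt_one ht).mpr hxt)).mul_left K) fun n => ?_
  calc ‖x ^ n * b n‖ ≤ ‖x‖ ^ n * (K / t ^ n) := by
        rw [norm_mul, norm_pow]; gcongr; exact hb n
    _ = K * (‖x‖ / t) ^ n := by rw [div_pow]; ring

end PowerSeries

theorem stmt3_general (a : ℕ → Quat) (R : ℝ) (ha : ConvOn a R)
    (α : Quat) (hα : ‖α‖ < R)
    (b : ℕ → Quat)
    (hb : ∀ n : ℕ, b n = α⁻¹ ^ (n + 1) * ∑' j : ℕ, α ^ (j + n + 1) * a (j + n + 1)) :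
    ∀ x : Quat, ‖x‖ < R → Summable fun n => x ^ n * b n := by
  intro x hx
  obtain ⟨t, hxαt, htR⟩ := exists_between (max_lt hx hα)
  have hxt : ‖x‖ < t := (le_max_left _ _).trans_lt hxαt
  have ht : 0 < t := (norm_nonneg x).trans_lt hxt
  have hαt : ‖α‖ < t := (le_max_right _ _).trans_lt hxαt
  obtain ⟨C, hC⟩ : ∃ C, ∀ i, t ^ i * ‖a i‖ ≤ C := by
    simpa only [Quaternion.norm_coe, Real.norm_of_nonneg ht.le] using
      (ha (t : Quat) (by simpa [abs_of_pos ht] using htR)).exists_norm_pow_mul_norm_le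
  have hC0 : 0 ≤ C := (by positivity : 0 ≤ t ^ 0 * ‖a 0‖).trans (hC 0)
  have hr1 : ‖α‖ / t < 1 := (div_lt_one ht).mpr hαt
  set K := C * (1 - ‖α‖ / t)⁻¹
  have hK : 0 ≤ K := mul_nonneg hC0 (inv_nonneg.mpr (by linarith))
  refine summable_pow_mul_of_norm_le_div_pow (K := K / t) hxt fun n => ?_
  have hbn : ‖b n‖ ≤ K / t ^ (n + 1) := by
    rw [hb n]
    refine norm_inv_pow_mul_le_div_pow ht hK ?_
    exact (norm_tsum_pow_mul_shift_le hαt hC (n + 1)).trans_eq (by ring)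
  rwa [pow_succ', ← div_div] at hbn

/-- If `bₙ = α^(−1−n) · Σ_{j>n} αʲ aⱼ` for a nonzero quaternion `α` with `‖α‖ < R`,
where `Σ wʲaⱼ` has radius of convergence at least `R`, then `Σ wⁿbₙ` converges at
every `x` with `‖x‖ < R`. -/
theorem stmt3 (a : ℕ → Quat) (R : ℝ) (ha : ConvOn a R)
    (α : Quat) (hα0 : α ≠ 0) (hα : ‖α‖ < R)
    (b : ℕ → Quat)
    (hb : ∀ n : ℕ, b n = α⁻¹ ^ (n + 1) * ∑' j : ℕ, α ^ (j + n + 1) * a (j + n + 1)) :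
    ∀ x : Quat, ‖x‖ < R → Summable fun n => x ^ n * b n :=
  stmt3_general a R ha α hα b hb
end
end

section
/- Let f be a slice regular function on B_R ⊂ ℍ, α ∈ B_R non-real, and write f(w) = Δ_α(w)·h(w) + w·a + b (the division with remainder by the characteristic polynomial Δ_α). Then: (i) the whole conjugacy sphere S_α is contained in the zero set of f if and only if a = 0 and b = 0; (ii) f has exactly one zero on S_α if and only if a ≠ 0 and −b·a⁻¹ ∈ S_α, and in that case the unique zero is −b·a⁻¹. -/
noncomputable section

/-!
On `S_α` the divisor `Δ_α` vanishes, so `f` agrees there with the affine map `x ↦ x·a + b`.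
Such a map has at most the one zero `-b·a⁻¹` when `a ≠ 0`, and vanishes at the two distinct
points `α`, `ᾱ` of `S_α` only if `a = b = 0`.
-/

section AffineZeros

variable {D : Type*} [DivisionRing D] {S : Set D} {F : D → D} {a b : D}

theorem mul_add_eq_zero_iff_eq_neg_mul_inv (ha : a ≠ 0) (x : D) :
    x * a + b = 0 ↔ x = -b * a⁻¹ := by
  rw [add_eq_zero_iff_eq_neg, eq_mul_inv_iff_mul_eq₀ ha]

theorem eq_zero_of_mul_add_eq_zero_of_ne {x y : D} (hxy : x ≠ y)
    (hx : x * a + b = 0) (hy : y * a + b = 0) : a = 0 ∧ b = 0 := by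
  have ha : (x - y) * a = 0 := by
    rw [sub_mul, sub_eq_zero]
    exact add_right_cancel (hx.trans hy.symm)
  have ha : a = 0 := (mul_eq_zero.mp ha).resolve_left (sub_ne_zero.mpr hxy)
  exact ⟨ha, by simpa [ha] using hx⟩

variable (hF : Set.EqOn F (fun x => x * a + b) S)
include hF

theorem forall_mem_eq_zero_iff_of_eqOn_affine {x y : D} (hx : x ∈ S) (hy : y ∈ S)
    (hxy : x ≠ y) : (∀ z ∈ S, F z = 0) ↔ a = 0 ∧ b = 0 := by
  constructor
  · intro h
    exact eq_zero_of_mul_add_eq_zero_of_ne hxy ((hF hx).symm.trans (h x hx))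
      ((hF hy).symm.trans (h y hy))
  · rintro ⟨rfl, rfl⟩ z hz
    simpa using hF hz

theorem eq_zero_iff_of_eqOn_affine (ha : a ≠ 0) {z : D} (hz : z ∈ S) :
    F z = 0 ↔ z = -b * a⁻¹ := by
  rw [hF hz]
  exact mul_add_eq_zero_iff_eq_neg_mul_inv ha z

theorem existsUnique_mem_eq_zero_iff_of_eqOn_affine {x y : D} (hx : x ∈ S) (hy : y ∈ S)
    (hxy : x ≠ y) : (∃! z, z ∈ S ∧ F z = 0) ↔ a ≠ 0 ∧ -b * a⁻¹ ∈ S := by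
  constructor
  · rintro ⟨z, ⟨hzS, hz⟩, huniq⟩
    have ha : a ≠ 0 := by
      rintro rfl
      have hb : b = 0 := by simpa [hF hzS] using hz
      have hzero : ∀ w ∈ S, F w = 0 :=
        (forall_mem_eq_zero_iff_of_eqOn_affine hF hx hy hxy).mpr ⟨rfl, hb⟩
      exact hxy ((huniq x ⟨hx, hzero x hx⟩).trans (huniq y ⟨hy, hzero y hy⟩).symm)
    exact ⟨ha, (eq_zero_iff_of_eqOn_affine hF ha hzS).mp hz ▸ hzS⟩
  · rintro ⟨ha, hmem⟩
    refine ⟨-b * a⁻¹, ⟨hmem, (eq_zero_iff_of_eqOn_affine hF ha hmem).mpr rfl⟩, ?_⟩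
    rintro z ⟨hzS, hz⟩
    exact (eq_zero_iff_of_eqOn_affine hF ha hzS).mp hz

end AffineZeros

theorem Δev_eq_zero_of_mem_Sset {α x : Quat} (hx : x ∈ Sset α) : Δev α x = 0 := by
  obtain ⟨htr, hnorm⟩ := hx
  have hnormSq : algebraMap ℝ Quat (‖x‖ ^ 2) = x * star x := by
    rw [Quaternion.self_mul_star, sq, Quaternion.normSq_eq_norm_mul_self]
    rfl
  rw [Δev, ← htr, ← hnorm, hnormSq]
  noncomm_ring

theorem mem_Sset_self (α : Quat) : α ∈ Sset α := ⟨rfl, rfl⟩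

theorem star_mem_Sset (α : Quat) : star α ∈ Sset α :=
  ⟨by rw [star_star, add_comm], norm_star α⟩

theorem star_ne_self_of_im_ne_zero {α : Quat} (hnr : α.im ≠ 0) : star α ≠ α := by
  rw [Ne, Quaternion.star_eq_self]
  rintro h
  exact hnr (by rw [h]; simp)

theorem stmt5_general (f h : ℕ → Quat) (a b : Quat) (R : ℝ)
    (α : Quat) (hα : ‖α‖ < R) (hnr : α.im ≠ 0)
    (hdiv : ∀ q : Quat, ‖q‖ < R → pev f q = Δev α q * pev h q + q * a + b) :
    ((∀ x ∈ Sset α, pev f x = 0) ↔ a = 0 ∧ b = 0) ∧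
    ((∃! x : Quat, x ∈ Sset α ∧ pev f x = 0) ↔ a ≠ 0 ∧ -b * a⁻¹ ∈ Sset α) ∧
    (a ≠ 0 → -b * a⁻¹ ∈ Sset α →
      ∀ x ∈ Sset α, (pev f x = 0 ↔ x = -b * a⁻¹)) := by
  have hF : Set.EqOn (pev f) (fun x => x * a + b) (Sset α) := fun x hx => by
    rw [hdiv x (hx.2 ▸ hα), Δev_eq_zero_of_mem_Sset hx, zero_mul, zero_add]
  have hne := (star_ne_self_of_im_ne_zero hnr).symm
  exact ⟨forall_mem_eq_zero_iff_of_eqOn_affine hF (mem_Sset_self α) (star_mem_Sset α) hne,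
    existsUnique_mem_eq_zero_iff_of_eqOn_affine hF (mem_Sset_self α) (star_mem_Sset α) hne,
    fun ha _ _ hx => eq_zero_iff_of_eqOn_affine hF ha hx⟩

/-- For `f` slice regular on `B_R` with `f(w) = Δ_α(w)·h(w) + w·a + b` (`α ∈ B_R`
non-real): (i) `S_α ⊆ V(f)` iff `a = 0 ∧ b = 0`; (ii) `f` has exactly one zero on
`S_α` iff `a ≠ 0` and `-b·a⁻¹ ∈ S_α`, and then the unique zero is `-b·a⁻¹`. -/
theorem stmt5 (f h : ℕ → Quat) (a b : Quat) (R : ℝ) (hR : 0 < R)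
    (hf : ConvOn f R) (hh : ConvOn h R)
    (α : Quat) (hα : ‖α‖ < R) (hnr : α.im ≠ 0)
    (hdiv : ∀ q : Quat, ‖q‖ < R → pev f q = Δev α q * pev h q + q * a + b) :
    ((∀ x ∈ Sset α, pev f x = 0) ↔ a = 0 ∧ b = 0) ∧
    ((∃! x : Quat, x ∈ Sset α ∧ pev f x = 0) ↔ a ≠ 0 ∧ -b * a⁻¹ ∈ Sset α) ∧
    (a ≠ 0 → -b * a⁻¹ ∈ Sset α →
      ∀ x ∈ Sset α, (pev f x = 0 ↔ x = -b * a⁻¹)) :=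
  stmt5_general f h a b R α hα hnr hdiv
end
end

section
/- Let f(w) = g(w) + a₀ be a slice regular function on B_R ⊂ ℍ, where g has all real coefficients and a₀ ∈ ℍ is non-real. Then every zero of f lies in the complex plane ℂ_I spanned by 1 and Im(a₀)/|Im(a₀)|, and f has no spherical zeros (it never vanishes on an entire conjugacy sphere S_α with α non-real). -/
noncomputable section

/-!
Split `f = g + Im f₀`, where `g` has the real coefficients `Re fᵢ`. Every value `g(q)` lies in
the real span of `1` and `q`, and `g(q̄) = conj (g(q))`. At a zero `q` of `f` we get
`g(q) = -Im f₀ ≠ 0`, and the imaginary part of an element of `span {1, q}` is a real multiple of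
`Im q`; hence `Im q` is parallel to `Im f₀`. A spherical zero would make both `α` and `ᾱ` zeros,
so `-Im f₀ = g(ᾱ) = conj (g(α)) = Im f₀`, which is impossible.
-/

namespace Quaternion

theorem mul_self_eq_smul_sub_normSq {R : Type*} [CommRing R] (q : ℍ[R]) :
    q * q = (2 * q.re) • q - normSq q • 1 := by
  rw [← coe_one, smul_coe, mul_one, eq_sub_iff_add_eq, ← self_mul_star, ← mul_add,
    self_add_star', mul_coe_eq_smul]

theorem pow_mem_span_one_self {R : Type*} [CommRing R] (q : ℍ[R]) (n : ℕ) :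
    q ^ n ∈ Submodule.span R {1, q} := by
  induction n with
  | zero => exact Submodule.subset_span (by simp)
  | succ n ih =>
    obtain ⟨c, d, h⟩ := Submodule.mem_span_pair.1 ih
    refine Submodule.mem_span_pair.2 ⟨-(d * normSq q), c + d * (2 * q.re), ?_⟩
    rw [pow_succ, ← h, add_mul, smul_mul_assoc, smul_mul_assoc, one_mul,
      mul_self_eq_smul_sub_normSq]
    module

theorem exists_im_eq_smul_im_of_mem_span_one_self {K : Type*} [Field K] {q x : ℍ[K]}
    (hx : x ∈ Submodule.span K {1, q}) (hx0 : x.im ≠ 0) : ∃ t : K, q.im = t • x.im := by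
  obtain ⟨r, s, rfl⟩ := Submodule.mem_span_pair.1 hx
  have him : (r • (1 : ℍ[K]) + s • q).im = s • q.im := by simp
  rw [him] at hx0 ⊢
  exact ⟨s⁻¹, by rw [smul_smul, inv_mul_cancel₀ (left_ne_zero_of_smul hx0), one_smul]⟩

theorem exists_eq_algebraMap_add_smul_normalized_of_im_eq_smul {q a : ℍ} {t : ℝ} (ha : a ≠ 0)
    (h : q.im = t • a) : ∃ x y : ℝ, q = algebraMap ℝ ℍ x + y • (‖a‖⁻¹ • a) := by
  refine ⟨q.re, t * ‖a‖, ?_⟩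
  rw [smul_smul, mul_assoc, mul_inv_cancel₀ (norm_ne_zero_iff.2 ha), mul_one, ← h]
  exact (re_add_im q).symm

end Quaternion

open Quaternion

theorem pev_coe_mem_span_one_self (c : ℕ → ℝ) (q : Quat) :
    pev (fun i => (c i : Quat)) q ∈ Submodule.span ℝ {1, q} := by
  by_cases hs : Summable fun i => q ^ i * (c i : Quat)
  · refine (Submodule.closed_of_finiteDimensional _).mem_of_tendsto hs.hasSum.tendsto_sum_nat
      (Filter.Eventually.of_forall fun s => Submodule.sum_mem _ fun i _ => ?_)
    rw [mul_coe_eq_smul]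
    exact Submodule.smul_mem _ _ (pow_mem_span_one_self q i)
  · rw [pev, tsum_eq_zero_of_not_summable hs]
    exact Submodule.zero_mem _

theorem star_pev_coe (c : ℕ → ℝ) (q : Quat) :
    star (pev (fun i => (c i : Quat)) q) = pev (fun i => (c i : Quat)) (star q) := by
  simp only [pev, tsum_star, star_mul, star_pow, star_coe, coe_commutes]

theorem pev_eq_pev_re_add_im {f : ℕ → Quat} {q : Quat} (hs : Summable fun i => q ^ i * f i)
    (hreal : ∀ i, 1 ≤ i → (f i).im = 0) :
    pev f q = pev (fun i => ((f i).re : Quat)) q + (f 0).im := by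
  have hsplit : (fun i => q ^ i * f i - (Pi.single 0 (f 0).im : ℕ → Quat) i) =
      fun i => q ^ i * ((f i).re : Quat) := by
    funext i
    rcases Nat.eq_zero_or_pos i with rfl | hi
    · simp
    · rw [Pi.single_eq_of_ne hi.ne', sub_zero]
      conv_lhs => rw [← re_add_im (f i), hreal i hi, add_zero]
  rw [pev, pev, ← hsplit, (hs.hasSum.sub (hasSum_pi_single 0 (f 0).im)).tsum_eq, sub_add_cancel]

theorem stmt8_general (f : ℕ → Quat) (R : ℝ) (hf : ConvOn f R)
    (hreal : ∀ i, 1 ≤ i → (f i).im = 0) (hnr : (f 0).im ≠ 0) :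
    (∀ q : Quat, ‖q‖ < R → pev f q = 0 →
      ∃ x y : ℝ, q = algebraMap ℝ Quat x + y • (‖(f 0).im‖⁻¹ • (f 0).im)) ∧
    ¬∃ α : Quat, ‖α‖ < R ∧ α.im ≠ 0 ∧ ∀ x ∈ Sset α, pev f x = 0 := by
  set g : ℕ → Quat := fun i => ((f i).re : Quat)
  have hg_of_zero : ∀ q : Quat, ‖q‖ < R → pev f q = 0 → pev g q = -(f 0).im := fun q hq hz =>
    eq_neg_of_add_eq_zero_left ((pev_eq_pev_re_add_im (hf q hq) hreal).symm.trans hz)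
  constructor
  · intro q hq hz
    have him : (pev g q).im ≠ 0 := by simpa [hg_of_zero q hq hz] using hnr
    obtain ⟨t, ht⟩ :=
      exists_im_eq_smul_im_of_mem_span_one_self (pev_coe_mem_span_one_self _ q) him
    rw [hg_of_zero q hq hz, im_neg, im_idem, smul_neg, ← neg_smul] at ht
    exact exists_eq_algebraMap_add_smul_normalized_of_im_eq_smul hnr ht
  · rintro ⟨α, hα, -, hzero⟩
    have hα' : ‖star α‖ < R := by rwa [norm_star]
    have hα_mem : star α ∈ Sset α := ⟨by rw [star_star, add_comm], Quaternion.norm_star α⟩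
    have hg_α := hg_of_zero α hα (hzero α ⟨rfl, rfl⟩)
    have hg_star := hg_of_zero (star α) hα' (hzero (star α) hα_mem)
    rw [← star_pev_coe, hg_α, star_neg, star_im, neg_neg, eq_neg_iff_add_eq_zero,
      ← two_smul ℝ] at hg_star
    exact hnr ((smul_eq_zero.1 hg_star).resolve_left two_ne_zero)

/-- If `f = g + a₀` with `g` having real coefficients (here: all coefficients `f i`
for `i ≥ 1` are real) and constant term `f 0` whose imaginary part is that of the
non-real `a₀`, then every zero of `f` lies in the complex plane spanned by `1` and
`I = Im(a₀)/|Im(a₀)|`, and `f` has no spherical zeros. -/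
theorem stmt8 (f : ℕ → Quat) (R : ℝ) (hR : 0 < R) (hf : ConvOn f R)
    (hreal : ∀ i, 1 ≤ i → (f i).im = 0) (hnr : (f 0).im ≠ 0) :
    (∀ q : Quat, ‖q‖ < R → pev f q = 0 →
      ∃ x y : ℝ, q = algebraMap ℝ Quat x + y • (‖(f 0).im‖⁻¹ • (f 0).im)) ∧
    ¬∃ α : Quat, ‖α‖ < R ∧ α.im ≠ 0 ∧ ∀ x ∈ Sset α, pev f x = 0 :=
  stmt8_general f R hf hreal hnr
end
end

section
/- Multiplicativity of the normal series: for slice regular functions f, g on B_R ⊂ ℍ (i.e., convergent power series with right quaternionic coefficients), N(f * g) = N(f) · N(g), where N(f) = f * conj(f) and the product on the right is the product of series with real coefficients. -/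
noncomputable section

/-!
Identify a coefficient sequence with a formal power series over `ℍ`; then `*` is the product
of power series and `conj` is anti-multiplicative, so
`N(f * g) = f * g * conj g * conj f = f * N(g) * conj f`.
The coefficients of `N(g)` are fixed by conjugation, hence real, hence central in `ℍ`,
so `N(g)` commutes with every power series and `f * N(g) * conj f = N(g) * N(f) = N(f) * N(g)`.
-/

open PowerSeries

lemma mk_scoef (a b : ℕ → Quat) : mk (scoef a b) = mk a * mk b :=
  PowerSeries.ext fun k => by simp [scoef, coeff_mul]

lemma cconj_scoef (a b : ℕ → Quat) : cconj (scoef a b) = scoef (cconj b) (cconj a) := by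
  funext k
  simp only [cconj, scoef, star_sum, star_mul]
  exact (Finset.Nat.sum_antidiagonal_swap ..).symm

lemma cconj_Ncoef (a : ℕ → Quat) : cconj (Ncoef a) = Ncoef a := by
  rw [Ncoef, cconj_scoef]
  exact congrArg (scoef · _) (funext fun i => star_star (a i))

lemma isSelfAdjoint_Ncoef (a : ℕ → Quat) (n : ℕ) : IsSelfAdjoint (Ncoef a n) :=
  congrFun (cconj_Ncoef a) n

lemma Quaternion.commute_of_isSelfAdjoint {x : Quat} (hx : IsSelfAdjoint x) (y : Quat) :
    Commute x y := by
  rw [Quaternion.star_eq_self.mp hx]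
  exact Quaternion.coe_commute _ _

lemma PowerSeries.commute_of_forall_coeff_commute {R : Type*} [Semiring R] {φ : R⟦X⟧}
    (h : ∀ n r, Commute (coeff n φ) r) (ψ : R⟦X⟧) : Commute φ ψ :=
  PowerSeries.ext fun k => by
    rw [coeff_mul, coeff_mul, ← Finset.Nat.sum_antidiagonal_swap]
    exact Finset.sum_congr rfl fun p _ => (h p.2 _).eq

lemma commute_mk_Ncoef (a : ℕ → Quat) (ψ : Quat⟦X⟧) : Commute (mk (Ncoef a)) ψ :=
  commute_of_forall_coeff_commute (fun n r => by
    rw [coeff_mk]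
    exact Quaternion.commute_of_isSelfAdjoint (isSelfAdjoint_Ncoef a n) r) ψ

theorem stmt11_general (f g : ℕ → Quat) :
    Ncoef (scoef f g) = scoef (Ncoef f) (Ncoef g) := by
  have hN (a : ℕ → Quat) : mk (Ncoef a) = mk a * mk (cconj a) := mk_scoef a (cconj a)
  have key : mk (Ncoef (scoef f g)) = mk (scoef (Ncoef f) (Ncoef g)) := calc
    mk (Ncoef (scoef f g)) = mk f * mk g * (mk (cconj g) * mk (cconj f)) := by
      rw [hN, cconj_scoef, mk_scoef, mk_scoef]
    _ = mk f * mk (Ncoef g) * mk (cconj f) := by simp only [hN, mul_assoc]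
    _ = mk (Ncoef g) * mk (Ncoef f) := by
      rw [← (commute_mk_Ncoef g (mk f)).eq, mul_assoc, hN f]
    _ = mk (scoef (Ncoef f) (Ncoef g)) := by
      rw [(commute_mk_Ncoef g _).eq, mk_scoef]
  funext k
  simpa only [coeff_mk] using congrArg (coeff k) key

/-- Multiplicativity of the normal series: `N(f * g) = N(f) · N(g)` (equality of the
coefficient sequences of the power series). -/
theorem stmt11 (f g : ℕ → Quat) (R : ℝ) (hR : 0 < R)
    (hf : ConvOn f R) (hg : ConvOn g R) :
    Ncoef (scoef f g) = scoef (Ncoef f) (Ncoef g) :=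
  stmt11_general f g
end
end

section
/- Let f(w) = Σ_{i=0}^n wⁱaᵢ be a regular quaternionic polynomial of degree n > 0 such that a₁, …, aₙ are all real and a₀ is non-real. Then all zeros of f are isolated (none is real, and f never vanishes on a whole conjugacy sphere), all zeros lie in the complex plane ℂ_I generated by 1 and I = Im(a₀)/|Im(a₀)|, and f has exactly n zeros counted with multiplicity. -/
noncomputable section
open Polynomial
open scoped Classical

/-- Evaluation of a regular quaternionic polynomial `p` at `q`: `p(q) = Σᵢ qⁱ aᵢ`
(powers of the variable on the left of the right coefficients). -/
def pevP (p : Quat[X]) (q : Quat) : Quat := p.sum fun i a => q ^ i * a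

/-- The conjugate polynomial (coefficientwise quaternionic conjugation). -/
def pconj (p : Quat[X]) : Quat[X] := p.sum fun i a => Polynomial.monomial i (star a)

/-- The normal (symmetrized) polynomial `N(p) = p * conj(p)`; note that polynomial
multiplication in `Quat[X]` is exactly the star product (`w` central). -/
def Np (p : Quat[X]) : Quat[X] := p * pconj p

/-- The characteristic polynomial of `α`: `Δ_α = X² - tr(α)·X + |α|²` (a polynomial
with real, hence central, coefficients). -/
def Δpoly (α : Quat) : Quat[X] :=
  X ^ 2 - Polynomial.C (α + star α) * X + Polynomial.C (algebraMap ℝ Quat (‖α‖ ^ 2))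

/-!
Write `f = g + a` with `g(w) = Σ wⁱ Re(aᵢ)` real and `a = Im(a₀)`. A real polynomial evaluated
at `q` lies in `ℝ + ℝq`, so `f(q) = 0` forces `Im q` to be a nonzero real multiple of `a`: zeros
are non-real, lie in `ℂ_I`, and no sphere consists of zeros. The embedding `ℂ ≅ ℂ_I ⊂ ℍ`
sending `i` to `I` turns `f` into `h = g + i|a| ∈ ℂ[X]`, `N(f)` into `h·h̄` and `Δ_α` into
`(X - z)(X - z̄)`. Since `h̄ = h - 2i|a|` shares no root with `h`, the multiplicity of `α` is that
of `z` as a root of `h`, and these add up to `deg h = n`.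
-/

lemma pevP_add (p r : Quat[X]) (q : Quat) : pevP (p + r) q = pevP p q + pevP r q :=
  Polynomial.sum_add_index _ _ _ (fun _ => by simp) fun _ _ _ => mul_add _ _ _

lemma pevP_monomial (i : ℕ) (a q : Quat) : pevP (monomial i a) q = q ^ i * a :=
  Polynomial.sum_monomial_index _ _ (by simp)

lemma pevP_C (a q : Quat) : pevP (C a) q = a := by
  simpa using pevP_monomial 0 a q

lemma pevP_map_eq_eval₂ {R : Type*} [CommSemiring R] (ψ : R →+* Quat) (h : R[X]) {q : Quat}
    (hq : ∀ a, Commute (ψ a) q) : pevP (h.map ψ) q = h.eval₂ ψ q := by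
  induction h using Polynomial.induction_on' with
  | add p r hp hr => rw [Polynomial.map_add, pevP_add, hp, hr, eval₂_add]
  | monomial i a => rw [map_monomial, pevP_monomial, eval₂_monomial, ((hq a).pow_right i).eq]

lemma pevP_map_algebraMap (g : ℝ[X]) (q : Quat) :
    pevP (g.map (algebraMap ℝ Quat)) q = aeval q g := by
  rw [pevP_map_eq_eval₂ _ _ fun a => Algebra.commutes a q, aeval_def]

lemma pevP_map_apply {R : Type*} [CommSemiring R] (ψ : R →+* Quat) (h : R[X]) (z : R) :
    pevP (h.map ψ) (ψ z) = ψ (h.eval z) := by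
  rw [pevP_map_eq_eval₂ _ _ fun a => (Commute.all a z).map ψ, eval₂_hom]

lemma coeff_pconj (p : Quat[X]) (k : ℕ) : (pconj p).coeff k = star (p.coeff k) := by
  rw [pconj, Polynomial.sum_def, finsetSum_coeff]
  simp only [coeff_monomial, Finset.sum_ite_eq', mem_support_iff]
  split_ifs with h
  · rfl
  · simp [not_not.mp h]

def rePart (p : Quat[X]) : ℝ[X] := p.sum fun i a => monomial i a.re

lemma coeff_rePart (p : Quat[X]) (k : ℕ) : (rePart p).coeff k = (p.coeff k).re := by
  rw [rePart, Polynomial.sum_def, finsetSum_coeff]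
  simp only [coeff_monomial, Finset.sum_ite_eq', mem_support_iff]
  split_ifs with h
  · rfl
  · rw [not_not.mp h]; rfl

lemma eq_map_rePart_add_C_im {f : Quat[X]} (hreal : ∀ i, 1 ≤ i → (f.coeff i).im = 0) :
    f = (rePart f).map (algebraMap ℝ Quat) + C (f.coeff 0).im := by
  ext1 k
  rw [coeff_add, coeff_map, coeff_rePart, coeff_C, ← Quaternion.re_add_im (f.coeff k)]
  rcases Nat.eq_zero_or_pos k with rfl | hk
  · simp [Quaternion.algebraMap_def]
  · simp [Quaternion.algebraMap_def, hk.ne', hreal k hk]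

lemma pevP_eq_aeval_rePart_add_im {f : Quat[X]} (hreal : ∀ i, 1 ≤ i → (f.coeff i).im = 0)
    (q : Quat) : pevP f q = aeval q (rePart f) + (f.coeff 0).im := by
  conv_lhs => rw [eq_map_rePart_add_C_im hreal]
  rw [pevP_add, pevP_map_algebraMap, pevP_C]

lemma Quaternion.mul_self_eq (q : Quat) :
    q * q = (2 * q.re) • q - algebraMap ℝ Quat (Quaternion.normSq q) := by
  rw [Quaternion.algebraMap_def, eq_sub_iff_add_eq, ← Quaternion.self_mul_star,
    Quaternion.star_eq_two_re_sub, mul_sub, ← Quaternion.mul_coe_eq_smul]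
  abel

lemma exists_aeval_eq_add_smul (g : ℝ[X]) (q : Quat) :
    ∃ c d : ℝ, aeval q g = algebraMap ℝ Quat c + d • q := by
  induction g using Polynomial.induction_on with
  | C a => exact ⟨a, 0, by simp⟩
  | add p r hp hr =>
    obtain ⟨c, d, hp⟩ := hp
    obtain ⟨c', d', hr⟩ := hr
    exact ⟨c + c', d + d', by rw [map_add, hp, hr, map_add, add_smul]; abel⟩
  | monomial n a ih =>
    obtain ⟨c, d, ih⟩ := ih
    refine ⟨-d * Quaternion.normSq q, c + 2 * d * q.re, ?_⟩
    rw [pow_succ, ← mul_assoc, map_mul, ih, aeval_X, add_mul, smul_mul_assoc,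
      Quaternion.mul_self_eq, Algebra.algebraMap_eq_smul_one, smul_mul_assoc, one_mul,
      Algebra.algebraMap_eq_smul_one, Algebra.algebraMap_eq_smul_one]
    module

lemma exists_im_eq_smul_of_pevP_eq_zero {f : Quat[X]}
    (hreal : ∀ i, 1 ≤ i → (f.coeff i).im = 0) (hnr : (f.coeff 0).im ≠ 0) {q : Quat}
    (hq : pevP f q = 0) : ∃ e : ℝ, e ≠ 0 ∧ q.im = e • (f.coeff 0).im := by
  obtain ⟨c, d, hcd⟩ := exists_aeval_eq_add_smul (rePart f) q
  rw [pevP_eq_aeval_rePart_add_im hreal, hcd] at hq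
  have him : d • q.im + (f.coeff 0).im = 0 := by
    simpa [Quaternion.algebraMap_def, Quaternion.im_zero] using congrArg Quaternion.im hq
  have hd : d ≠ 0 := by
    rintro rfl
    exact hnr (by simpa using him)
  refine ⟨-d⁻¹, by simpa using hd, ?_⟩
  rw [eq_neg_of_add_eq_zero_right him, smul_neg, neg_smul, neg_neg, smul_smul,
    inv_mul_cancel₀ hd, one_smul]

lemma im_ne_zero_of_pevP_eq_zero {f : Quat[X]} (hreal : ∀ i, 1 ≤ i → (f.coeff i).im = 0)
    (hnr : (f.coeff 0).im ≠ 0) {q : Quat} (hq : pevP f q = 0) : q.im ≠ 0 := by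
  obtain ⟨e, he, him⟩ := exists_im_eq_smul_of_pevP_eq_zero hreal hnr hq
  rw [him]
  exact smul_ne_zero he hnr

lemma exists_eq_of_pevP_eq_zero {f : Quat[X]} (hreal : ∀ i, 1 ≤ i → (f.coeff i).im = 0)
    (hnr : (f.coeff 0).im ≠ 0) {q : Quat} (hq : pevP f q = 0) :
    ∃ x y : ℝ, q = algebraMap ℝ Quat x + y • (‖(f.coeff 0).im‖⁻¹ • (f.coeff 0).im) := by
  obtain ⟨e, -, him⟩ := exists_im_eq_smul_of_pevP_eq_zero hreal hnr hq
  refine ⟨q.re, e * ‖(f.coeff 0).im‖, ?_⟩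
  rw [smul_smul, mul_assoc, mul_inv_cancel₀ (norm_ne_zero_iff.mpr hnr), mul_one, ← him,
    Quaternion.algebraMap_def, Quaternion.re_add_im]

lemma mem_Sset_of_re_eq {x α : Quat} (hre : x.re = α.re)
    (him : x.imI ^ 2 + x.imJ ^ 2 + x.imK ^ 2 = α.imI ^ 2 + α.imJ ^ 2 + α.imK ^ 2) :
    x ∈ Sset α := by
  refine ⟨by rw [Quaternion.self_add_star', Quaternion.self_add_star', hre], ?_⟩
  have hnormSq : Quaternion.normSq x = Quaternion.normSq α := by
    rw [Quaternion.normSq_def', Quaternion.normSq_def']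
    change x.re ^ 2 + _ + _ + _ = α.re ^ 2 + _ + _ + _
    rw [hre]
    linear_combination him
  rw [← Real.sqrt_sq (norm_nonneg x), ← Real.sqrt_sq (norm_nonneg α), sq, sq,
    ← Quaternion.normSq_eq_norm_mul_self, ← Quaternion.normSq_eq_norm_mul_self, hnormSq]

lemma exists_mem_Sset_forall_im_ne_smul {α : Quat} (hα : α.im ≠ 0) (v : Quat) :
    ∃ x ∈ Sset α, ∀ e : ℝ, x.im ≠ e • v := by
  set t := ‖α.im‖
  have ht : t ^ 2 = α.imI ^ 2 + α.imJ ^ 2 + α.imK ^ 2 := by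
    rw [sq, ← Quaternion.normSq_eq_norm_mul_self, Quaternion.normSq_def']
    simp
  by_contra! hline
  obtain ⟨e₁, he₁⟩ := hline ⟨α.re, t, 0, 0⟩ (mem_Sset_of_re_eq rfl (by simp [ht]))
  obtain ⟨e₂, he₂⟩ := hline ⟨α.re, 0, t, 0⟩ (mem_Sset_of_re_eq rfl (by simp [ht]))
  have hI : t = e₁ * v.imI := congrArg QuaternionAlgebra.imI he₁
  have hJ : 0 = e₁ * v.imJ := congrArg QuaternionAlgebra.imJ he₁
  have hJ' : t = e₂ * v.imJ := congrArg QuaternionAlgebra.imJ he₂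
  have ht0 : t ≠ 0 := norm_ne_zero_iff.mpr hα
  have hvJ : v.imJ = 0 := (mul_eq_zero.mp hJ.symm).resolve_left fun h => ht0 (by simp [hI, h])
  exact ht0 (by rw [hJ', hvJ, mul_zero])

namespace Polynomial

variable {K : Type*} [Field K]

lemma pow_mul_dvd_mul_map_iff (σ : K →+* K) {h : K[X]} {z : K} (hz : ¬(h.map σ).IsRoot z)
    (m : ℕ) : ((X - C z) * (X - C (σ z))) ^ m ∣ h * h.map σ ↔ (X - C z) ^ m ∣ h := by
  constructor
  · intro hdvd
    have hcop : IsCoprime ((X - C z) ^ m) (h.map σ) :=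
      ((irreducible_X_sub_C z).coprime_iff_not_dvd.mpr (mt dvd_iff_isRoot.mp hz)).pow_left
    exact hcop.dvd_of_dvd_mul_right ((mul_pow (X - C z) _ m ▸ dvd_mul_right _ _).trans hdvd)
  · intro hdvd
    have hdvdσ : (X - C (σ z)) ^ m ∣ h.map σ := by
      simpa using Polynomial.map_dvd σ hdvd
    rw [mul_pow]
    exact mul_dvd_mul hdvd hdvdσ

lemma sum_rootMultiplicity_eq_natDegree [IsAlgClosed K] {ι : Type*} [Fintype ι] {h : K[X]}
    (hh : h ≠ 0) {z : ι → K} (hz : Function.Injective z)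
    (hroots : ∀ w, h.IsRoot w ↔ w ∈ Set.range z) :
    ∑ i, h.rootMultiplicity (z i) = h.natDegree := by
  classical
  have himage : Finset.univ.image z = h.roots.toFinset := by
    ext w
    rw [Multiset.mem_toFinset, mem_roots hh, hroots]
    simp [eq_comm]
  calc ∑ i, h.rootMultiplicity (z i) = ∑ w ∈ h.roots.toFinset, h.roots.count w := by
        rw [← himage, Finset.sum_image hz.injOn]
        simp only [count_roots]
    _ = h.natDegree := by
        rw [Multiset.toFinset_sum_count_eq, IsAlgClosed.card_roots_eq_natDegree]

end Polynomial

section StarCompatibleEmbedding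

variable {R : Type*} [CommRing R] {σ : R →+* R} {ψ : R →+* Quat}

lemma pconj_map (hψ : ∀ z, star (ψ z) = ψ (σ z)) (h : R[X]) :
    pconj (h.map ψ) = (h.map σ).map ψ := by
  ext1 k
  rw [coeff_pconj, coeff_map, coeff_map, coeff_map, hψ]

lemma Np_map (hψ : ∀ z, star (ψ z) = ψ (σ z)) (h : R[X]) :
    Np (h.map ψ) = (h * h.map σ).map ψ := by
  rw [Np, pconj_map hψ, Polynomial.map_mul]

lemma Δpoly_apply (hψ : ∀ z, star (ψ z) = ψ (σ z)) (z : R) :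
    Δpoly (ψ z) = ((X - C z) * (X - C (σ z))).map ψ := by
  have hexpand : (X - C z) * (X - C (σ z)) = X ^ 2 - C (z + σ z) * X + C (z * σ z) := by
    rw [C_add, C_mul]
    ring
  rw [Δpoly, hexpand, Polynomial.map_add, Polynomial.map_sub, Polynomial.map_mul,
    Polynomial.map_pow, map_X, map_C, map_C, map_add ψ, map_mul ψ, ← hψ,
    Quaternion.self_mul_star, Quaternion.normSq_eq_norm_mul_self, ← sq, Quaternion.algebraMap_def]

end StarCompatibleEmbedding

lemma Δpoly_pow_dvd_Np_map_iff {ψ : ℂ →+* Quat}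
    (hψ : ∀ z, star (ψ z) = ψ (starRingEnd ℂ z)) {h : ℂ[X]} (hh : h ≠ 0) {z : ℂ}
    (hz : ¬(h.map (starRingEnd ℂ)).IsRoot z) (n : ℕ) :
    Δpoly (ψ z) ^ n ∣ Np (h.map ψ) ↔ n ≤ h.rootMultiplicity z := by
  rw [Δpoly_apply hψ, Np_map hψ, ← Polynomial.map_pow,
    map_dvd_map ψ ψ.injective (((monic_X_sub_C z).mul (monic_X_sub_C _)).pow n),
    pow_mul_dvd_mul_map_iff _ hz, le_rootMultiplicity_iff hh]

lemma sum_multiplicity_eq_natDegree_map {ψ : ℂ →+* Quat}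
    (hψ : ∀ z, star (ψ z) = ψ (starRingEnd ℂ z)) {h : ℂ[X]}
    (hconj : ∀ z, h.IsRoot z → ¬(h.map (starRingEnd ℂ)).IsRoot z)
    (hrange : ∀ q, pevP (h.map ψ) q = 0 → q ∈ Set.range ψ)
    {k : ℕ} (α : Fin k → Quat) (m : Fin k → ℕ) (hinj : Function.Injective α)
    (hzero : ∀ j, pevP (h.map ψ) (α j) = 0)
    (hall : ∀ q, pevP (h.map ψ) q = 0 → ∃ j, q = α j)
    (hmult : ∀ j,
      Δpoly (α j) ^ m j ∣ Np (h.map ψ) ∧ ¬Δpoly (α j) ^ (m j + 1) ∣ Np (h.map ψ)) :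
    ∑ j, m j = (h.map ψ).natDegree := by
  have hh : h ≠ 0 := fun h0 => hconj 0 (by simp [h0]) (by simp [h0])
  have hroot_iff (w : ℂ) : h.IsRoot w ↔ pevP (h.map ψ) (ψ w) = 0 := by
    rw [pevP_map_apply, map_eq_zero_iff ψ ψ.injective, IsRoot.def]
  choose z hz using fun j => hrange (α j) (hzero j)
  have hzinj : Function.Injective z := fun i j hij => hinj (by rw [← hz i, ← hz j, hij])
  have hroots (w : ℂ) : h.IsRoot w ↔ w ∈ Set.range z := by
    rw [hroot_iff]
    constructor
    · intro hw
      obtain ⟨j, hj⟩ := hall _ hw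
      exact ⟨j, ψ.injective (by rw [hz j, hj])⟩
    · rintro ⟨j, rfl⟩
      rw [hz j]
      exact hzero j
  have hm (j : Fin k) : m j = h.rootMultiplicity (z j) := by
    have hdvd_iff := Δpoly_pow_dvd_Np_map_iff hψ hh (hconj _ ((hroots _).mpr ⟨j, rfl⟩))
    obtain ⟨hdvd, hndvd⟩ := hmult j
    rw [← hz j, hdvd_iff] at hdvd hndvd
    omega
  rw [natDegree_map_eq_of_injective ψ.injective,
    ← sum_rootMultiplicity_eq_natDegree hh hzinj hroots]
  exact Finset.sum_congr rfl fun j _ => hm j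

lemma not_isRoot_map_conj_of_isRoot {g : ℝ[X]} {c : ℂ} (hc : c.im ≠ 0) {z : ℂ}
    (hz : (g.map (algebraMap ℝ ℂ) + C c).IsRoot z) :
    ¬((g.map (algebraMap ℝ ℂ) + C c).map (starRingEnd ℂ)).IsRoot z := by
  intro hz'
  have hconj_real : (starRingEnd ℂ).comp (algebraMap ℝ ℂ) = algebraMap ℝ ℂ :=
    RingHom.ext Complex.conj_ofReal
  rw [Polynomial.map_add, Polynomial.map_map, hconj_real, map_C] at hz'
  simp only [IsRoot.def, eval_add, eval_C] at hz hz'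
  exact hc (Complex.conj_eq_iff_im.mp (by linear_combination hz' - hz))

lemma Quaternion.unit_im_mul_self {q : Quat} (hq : q.im ≠ 0) :
    (‖q.im‖⁻¹ • q.im) * (‖q.im‖⁻¹ • q.im) = -1 := by
  rw [smul_mul_smul, ← sq q.im, Quaternion.im_sq, Quaternion.normSq_eq_norm_mul_self,
    smul_neg, Quaternion.smul_coe, ← mul_inv,
    inv_mul_cancel₀ (mul_self_ne_zero.mpr (norm_ne_zero_iff.mpr hq)),
    Quaternion.coe_one]

lemma star_liftAux {u : Quat} (hu : u * u = -1) (hstar : star u = -u) (z : ℂ) :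
    star (Complex.liftAux u hu z) = Complex.liftAux u hu (starRingEnd ℂ z) := by
  simp [Complex.liftAux_apply, hstar, Quaternion.algebraMap_def]

lemma sum_multiplicity_eq_natDegree {f : Quat[X]} (hreal : ∀ i, 1 ≤ i → (f.coeff i).im = 0)
    (hnr : (f.coeff 0).im ≠ 0) {k : ℕ} (α : Fin k → Quat) (m : Fin k → ℕ)
    (hinj : Function.Injective α) (hzero : ∀ j, pevP f (α j) = 0)
    (hall : ∀ q, pevP f q = 0 → ∃ j, q = α j)
    (hmult : ∀ j, Δpoly (α j) ^ m j ∣ Np f ∧ ¬Δpoly (α j) ^ (m j + 1) ∣ Np f) :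
    ∑ j, m j = f.natDegree := by
  set v := (f.coeff 0).im
  set u := ‖v‖⁻¹ • v
  have hu : u * u = -1 := Quaternion.unit_im_mul_self hnr
  set ψ := Complex.liftAux u hu
  set h : ℂ[X] := (rePart f).map (algebraMap ℝ ℂ) + C (‖v‖ * Complex.I)
  have hψv : ψ (‖v‖ * Complex.I) = v := by
    simp [ψ, Complex.liftAux_apply, u, smul_smul, norm_ne_zero_iff.mpr hnr]
  have hf : f = h.map (ψ : ℂ →+* Quat) := by
    rw [Polynomial.map_add, Polynomial.map_map, AlgHom.comp_algebraMap, map_C, RingHom.coe_coe,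
      hψv]
    exact eq_map_rePart_add_C_im hreal
  have hrange (q : Quat) (hq : pevP f q = 0) : q ∈ Set.range ψ := by
    obtain ⟨x, y, hxy⟩ := exists_eq_of_pevP_eq_zero hreal hnr hq
    exact ⟨⟨x, y⟩, by rw [Complex.liftAux_apply, hxy]⟩
  rw [hf] at hzero hall hmult hrange ⊢
  exact sum_multiplicity_eq_natDegree_map
    (star_liftAux hu (by simp [u, v]))
    (fun z hz => not_isRoot_map_conj_of_isRoot (by simpa using norm_ne_zero_iff.mpr hnr) hz)
    hrange α m hinj hzero hall hmult

theorem stmt19_general (f : Quat[X])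
    (hreal : ∀ i, 1 ≤ i → (f.coeff i).im = 0) (hnr : (f.coeff 0).im ≠ 0) :
    (∀ q : Quat, pevP f q = 0 → q.im ≠ 0) ∧
    (¬∃ α : Quat, α.im ≠ 0 ∧ ∀ x ∈ Sset α, pevP f x = 0) ∧
    (∀ q : Quat, pevP f q = 0 →
      ∃ x y : ℝ, q = algebraMap ℝ Quat x + y • (‖(f.coeff 0).im‖⁻¹ • (f.coeff 0).im)) ∧
    ∀ (k : ℕ) (α : Fin k → Quat) (m : Fin k → ℕ),
      Function.Injective α →
      (∀ j, pevP f (α j) = 0) →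
      (∀ q : Quat, pevP f q = 0 → ∃ j, q = α j) →
      (∀ j, Δpoly (α j) ^ (m j) ∣ Np f ∧ ¬ Δpoly (α j) ^ (m j + 1) ∣ Np f) →
      ∑ j, m j = f.natDegree := by
  refine ⟨fun q => im_ne_zero_of_pevP_eq_zero hreal hnr, ?_,
    fun q => exists_eq_of_pevP_eq_zero hreal hnr,
    fun k α m => sum_multiplicity_eq_natDegree hreal hnr α m⟩
  rintro ⟨α, hα, hzero⟩
  obtain ⟨x, hx, hx_off_line⟩ := exists_mem_Sset_forall_im_ne_smul hα (f.coeff 0).im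
  obtain ⟨e, -, he⟩ := exists_im_eq_smul_of_pevP_eq_zero hreal hnr (hzero x hx)
  exact hx_off_line e he

/-- A regular quaternionic polynomial of degree `n > 0` whose coefficients `a₁, …, aₙ`
are real and whose constant term `a₀` is non-real has only isolated zeros: no zero is
real, no conjugacy sphere is entirely made of zeros, every zero lies in the complex
plane spanned by `1` and `I = Im(a₀)/|Im(a₀)|`, and the multiplicities of the zeros
sum up to `n`. -/
theorem stmt19 (f : Quat[X]) (hn : 0 < f.natDegree)
    (hreal : ∀ i, 1 ≤ i → (f.coeff i).im = 0) (hnr : (f.coeff 0).im ≠ 0) :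
    (∀ q : Quat, pevP f q = 0 → q.im ≠ 0) ∧
    (¬∃ α : Quat, α.im ≠ 0 ∧ ∀ x ∈ Sset α, pevP f x = 0) ∧
    (∀ q : Quat, pevP f q = 0 →
      ∃ x y : ℝ, q = algebraMap ℝ Quat x + y • (‖(f.coeff 0).im‖⁻¹ • (f.coeff 0).im)) ∧
    ∀ (k : ℕ) (α : Fin k → Quat) (m : Fin k → ℕ),
      Function.Injective α →
      (∀ j, pevP f (α j) = 0) →
      (∀ q : Quat, pevP f q = 0 → ∃ j, q = α j) →
      (∀ j, Δpoly (α j) ^ (m j) ∣ Np f ∧ ¬ Δpoly (α j) ^ (m j + 1) ∣ Np f) →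
      ∑ j, m j = f.natDegree :=
  stmt19_general f hreal hnr
end
end
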